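/- arXiv:2105.00252 — 7 statements merged into one kernel-verified Lean document; each statement's English description precedes it below -/
import Mathlib

section
/- Let β > 0 and 0 < ω < β. Every continuously differentiable solution (u, v) : ℝ → ℝ² of the Hamiltonian system u'(x) = −(ω+β)v(x) − v(x)³, v'(x) = (ω−β)u(x) + u(x)³ with initial condition u(0) = √(2(β−ω)), v(0) = 0 is a homoclinic orbit to the origin: (u(x), v(x)) → (0, 0) as x → +∞ and as x → −∞. -/
/-!
The energy `H` is a first integral, so the orbit stays on the compact curve `{H = 0}`, whose only
equilibrium is the origin. By uniqueness for the (locally Lipschitz) vector field the orbit never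
reaches the origin, and since `{H = 0}` meets `u = 0` only there, `u > 0` throughout. On
`{H = 0, u > 0}` the line `v = 0` is met only at `(√(2(β−ω)), 0)`, where `v' > 0`; hence `v ≥ 0`
for `x ≥ 0`, so `u` decreases and converges, and `v`, a continuous function of `u` on this upper
branch, converges too. A limit of a solution whose derivative also converges is an equilibrium,
so both limits vanish. The time reversal `(u(−x), −v(−x))` is again a solution with the same initial
value, which gives the limit at `−∞`.
-/

open Filter Topology Set Metric

theorem ODE_solution_eq_const_of_eq_equilibrium {E : Type*} [NormedAddCommGroup E]
    [NormedSpace ℝ E] {f : E → E} {s : Set E} {K : NNReal} (hf : LipschitzOnWith K f s)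
    {x₀ : E} (hx₀ : f x₀ = 0) (hx₀s : x₀ ∈ s) {γ : ℝ → E}
    (hγ : ∀ t, HasDerivAt γ (f (γ t)) t ∧ γ t ∈ s) {t₀ : ℝ} (h : γ t₀ = x₀) :
    γ = fun _ => x₀ :=
  ODE_solution_unique_univ (v := fun _ => f) (fun _ => hf) hγ
    (fun _ => ⟨hx₀ ▸ hasDerivAt_const _ x₀, hx₀s⟩) h

theorem eq_zero_of_tendsto_deriv_atTop {f f' : ℝ → ℝ} {L c : ℝ}
    (hd : ∀ x, HasDerivAt f (f' x) x)
    (hL : Tendsto f atTop (𝓝 L)) (hc : Tendsto f' atTop (𝓝 c)) : c = 0 := by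
  have hslope : ∀ n : ℕ, ∃ ξ ∈ Ioo (n : ℝ) (n + 1), f' ξ = f (n + 1) - f n := fun n => by
    obtain ⟨ξ, hξ, h⟩ := exists_hasDerivAt_eq_slope f f' (lt_add_one (n : ℝ))
      (fun x _ => (hd x).continuousAt.continuousWithinAt) (fun x _ => hd x)
    exact ⟨ξ, hξ, by simpa using h⟩
  choose ξ hξ hξ_slope using hslope
  have hξ_top : Tendsto ξ atTop atTop :=
    tendsto_atTop_mono (fun n => (hξ n).1.le) tendsto_natCast_atTop_atTop
  have hdiff : Tendsto (fun n : ℕ => f ((n : ℝ) + 1) - f n) atTop (𝓝 (L - L)) :=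
    (hL.comp (tendsto_atTop_add_const_right _ 1 tendsto_natCast_atTop_atTop)).sub
      (hL.comp tendsto_natCast_atTop_atTop)
  simpa using tendsto_nhds_unique ((hc.comp hξ_top).congr hξ_slope) hdiff

theorem AntitoneOn.exists_tendsto_atTop {f : ℝ → ℝ} {a : ℝ} (hf : AntitoneOn f (Ici a))
    (hbdd : BddBelow (f '' Ici a)) : ∃ L, Tendsto f atTop (𝓝 L) := by
  have hanti : Antitone fun x => f (max x a) := fun x y hxy =>
    hf (le_max_right x a) (le_max_right y a) (max_le_max_right a hxy)
  have hbdd' : BddBelow (range fun x => f (max x a)) :=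
    hbdd.mono (range_subset_iff.2 fun x => mem_image_of_mem f (le_max_right x a))
  refine ⟨_, (tendsto_atTop_ciInf hanti hbdd').congr' ?_⟩
  filter_upwards [eventually_ge_atTop a] with x hx
  rw [max_eq_left hx]

namespace QuarticHamiltonian

noncomputable def energy (β ω u v : ℝ) : ℝ :=
  (u ^ 4 + v ^ 4) / 4 + β / 2 * (v ^ 2 - u ^ 2) + ω / 2 * (u ^ 2 + v ^ 2)

structure IsSolution (β ω : ℝ) (u v : ℝ → ℝ) : Prop where
  hasDerivAt_u : ∀ t, HasDerivAt u (-(ω + β) * v t - v t ^ 3) t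
  hasDerivAt_v : ∀ t, HasDerivAt v ((ω - β) * u t + u t ^ 3) t

variable {β ω x y : ℝ}

theorem four_mul_energy (β ω x y : ℝ) :
    4 * energy β ω x y = x ^ 2 * (x ^ 2 - 2 * (β - ω)) + y ^ 2 * (y ^ 2 + 2 * (ω + β)) := by
  unfold energy
  ring

theorem energy_zero_left_eq_zero_iff (hsum : 0 < ω + β) : energy β ω 0 y = 0 ↔ y = 0 := by
  have h := four_mul_energy β ω 0 y
  have hpos : y ^ 2 + 2 * (ω + β) ≠ 0 := by positivity
  constructor
  · intro hE
    simpa [hE, hpos] using h.symm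
  · rintro rfl
    simpa using h

theorem energy_zero_right_eq_zero_iff :
    energy β ω x 0 = 0 ↔ x ^ 2 = 0 ∨ x ^ 2 = 2 * (β - ω) := by
  rw [← mul_eq_zero_iff_left (four_ne_zero' ℝ), four_mul_energy, ← sub_eq_zero (b := 2 * _)]
  simp

theorem energy_sqrt_zero (hωβ : ω ≤ β) : energy β ω √(2 * (β - ω)) 0 = 0 :=
  energy_zero_right_eq_zero_iff.2 (.inr (Real.sq_sqrt (by linarith)))

theorem mem_closedBall_of_energy_eq_zero (hE : energy β ω x y = 0) (hωβ : ω ≤ β)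
    (hsum : 0 ≤ ω + β) : (x, y) ∈ closedBall (0 : ℝ × ℝ) √(2 * (β - ω)) := by
  have h := four_mul_energy β ω x y
  have hx : x ^ 2 ≤ 2 * (β - ω) := by
    nlinarith [sq_nonneg x, sq_nonneg y, mul_nonneg (sq_nonneg y) (sq_nonneg y)]
  have hy : y ^ 2 ≤ 2 * (β - ω) := by
    nlinarith [sq_nonneg x, sq_nonneg y, sq_nonneg (x ^ 2 - (β - ω)), sq_nonneg (y ^ 2 - (β - ω))]
  rw [mem_closedBall_zero_iff, Prod.norm_def, Real.norm_eq_abs, Real.norm_eq_abs]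
  exact max_le (Real.abs_le_sqrt hx) (Real.abs_le_sqrt hy)

theorem sq_add_eq_of_energy_eq_zero (hE : energy β ω x y = 0) :
    (y ^ 2 + (ω + β)) ^ 2 = (ω + β) ^ 2 + 2 * (β - ω) * x ^ 2 - x ^ 4 := by
  have h := four_mul_energy β ω x y
  rw [hE] at h
  linear_combination -h

theorem exists_tendsto_of_tendsto_of_energy_eq_zero {u v : ℝ → ℝ} {L : ℝ} (hsum : 0 ≤ ω + β)
    (hE : ∀ t, energy β ω (u t) (v t) = 0) (hv : ∀ t ≥ 0, 0 ≤ v t)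
    (hL : Tendsto u atTop (𝓝 L)) : ∃ V, Tendsto v atTop (𝓝 V) := by
  let q : ℝ → ℝ := fun x => (ω + β) ^ 2 + 2 * (β - ω) * x ^ 2 - x ^ 4
  have hv_eq : ∀ t ≥ 0, v t = √(√(q (u t)) - (ω + β)) := fun t ht => by
    rw [show q (u t) = _ from (sq_add_eq_of_energy_eq_zero (hE t)).symm,
      Real.sqrt_sq (by positivity), add_sub_cancel_right, Real.sqrt_sq (hv t ht)]
  have hq : Continuous q := by fun_prop
  refine ⟨_, ((((hq.tendsto L).comp hL).sqrt.sub_const (ω + β)).sqrt).congr' ?_⟩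
  filter_upwards [eventually_ge_atTop 0] with t ht
  exact (hv_eq t ht).symm

namespace IsSolution

variable {u v : ℝ → ℝ}

theorem continuous_u (hs : IsSolution β ω u v) : Continuous u :=
  continuous_iff_continuousAt.2 fun t => (hs.hasDerivAt_u t).continuousAt

theorem continuous_v (hs : IsSolution β ω u v) : Continuous v :=
  continuous_iff_continuousAt.2 fun t => (hs.hasDerivAt_v t).continuousAt

theorem comp_neg (hs : IsSolution β ω u v) :
    IsSolution β ω (fun t => u (-t)) (fun t => -v (-t)) where
  hasDerivAt_u t := ((hs.hasDerivAt_u (-t)).comp t (hasDerivAt_neg t)).congr_deriv (by ring)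
  hasDerivAt_v t := ((hs.hasDerivAt_v (-t)).comp t (hasDerivAt_neg t)).neg.congr_deriv (by ring)

theorem energy_eq (hs : IsSolution β ω u v) (s t : ℝ) :
    energy β ω (u s) (v s) = energy β ω (u t) (v t) := by
  have hderiv : ∀ t, HasDerivAt (fun t => energy β ω (u t) (v t)) 0 t := fun t => by
    have hu := hs.hasDerivAt_u t
    have hv := hs.hasDerivAt_v t
    refine ((((hu.pow 4).add (hv.pow 4)).div_const 4).add
      (((hv.pow 2).sub (hu.pow 2)).const_mul (β / 2)) |>.add
      (((hu.pow 2).add (hv.pow 2)).const_mul (ω / 2))).congr_deriv ?_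
    push_cast
    ring
  exact is_const_of_deriv_eq_zero (fun t => (hderiv t).differentiableAt)
    (fun t => (hderiv t).deriv) s t

theorem eq_zero_of_eq_zero (hs : IsSolution β ω u v) (hωβ : ω ≤ β) (hsum : 0 ≤ ω + β)
    (hE : ∀ t, energy β ω (u t) (v t) = 0) {t₀ : ℝ} (h₀ : (u t₀, v t₀) = 0) (t : ℝ) :
    (u t, v t) = 0 := by
  let F : ℝ × ℝ → ℝ × ℝ := fun p => (-(ω + β) * p.2 - p.2 ^ 3, (ω - β) * p.1 + p.1 ^ 3)
  obtain ⟨K, hK⟩ := ((show ContDiff ℝ 1 F by fun_prop).locallyLipschitz.locallyLipschitzOn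
    ).exists_lipschitzOnWith_of_compact (isCompact_closedBall (0 : ℝ × ℝ) √(2 * (β - ω)))
  have hconst := ODE_solution_eq_const_of_eq_equilibrium hK (by simp [F])
    (mem_closedBall_self (Real.sqrt_nonneg _)) (γ := fun t => (u t, v t))
    (fun t => ⟨(hs.hasDerivAt_u t).prodMk (hs.hasDerivAt_v t),
      mem_closedBall_of_energy_eq_zero (hE t) hωβ hsum⟩) h₀
  exact congrFun hconst t

theorem u_pos (hs : IsSolution β ω u v) (hωβ : ω ≤ β) (hsum : 0 < ω + β)
    (hE : ∀ t, energy β ω (u t) (v t) = 0) (hu₀ : 0 < u 0) (t : ℝ) : 0 < u t := by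
  by_contra! ht
  obtain ⟨s, hus⟩ : ∃ s, u s = 0 := intermediate_value_univ t 0 hs.continuous_u ⟨ht, hu₀.le⟩
  have hvs : v s = 0 := (energy_zero_left_eq_zero_iff hsum).1 (hus ▸ hE s)
  have hzero := hs.eq_zero_of_eq_zero hωβ hsum.le hE (Prod.ext hus hvs) 0
  exact hu₀.ne' (congrArg Prod.fst hzero)

theorem v_nonneg (hs : IsSolution β ω u v) (hωβ : ω < β)
    (hE : ∀ t, energy β ω (u t) (v t) = 0) (hu : ∀ t, 0 < u t) (hv₀ : v 0 = 0) {t : ℝ}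
    (ht : 0 ≤ t) : 0 ≤ v t := by
  have hcross : ∀ s, -v s = 0 → -((ω - β) * u s + u s ^ 3) < 0 := fun s hvs => by
    have hsq : u s ^ 2 = 2 * (β - ω) :=
      (energy_zero_right_eq_zero_iff.1 (neg_eq_zero.1 hvs ▸ hE s)).resolve_left
        (pow_ne_zero 2 (hu s).ne')
    nlinarith [hu s]
  have := image_le_of_deriv_right_lt_deriv_boundary (f := fun s => -v s) (B := fun _ => 0)
    hs.continuous_v.neg.continuousOn (fun s _ => (hs.hasDerivAt_v s).neg.hasDerivWithinAt)
    (by simp [hv₀]) (fun _ => hasDerivAt_const _ _) (fun s _ => hcross s) ⟨ht, le_rfl⟩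
  simpa using this

theorem antitoneOn_u (hs : IsSolution β ω u v) (hsum : 0 ≤ ω + β) (hv : ∀ t ≥ 0, 0 ≤ v t) :
    AntitoneOn u (Ici 0) := by
  refine antitoneOn_of_hasDerivWithinAt_nonpos (convex_Ici 0) hs.continuous_u.continuousOn
    (fun t _ => (hs.hasDerivAt_u t).hasDerivWithinAt) fun t ht => ?_
  rw [interior_Ici] at ht
  have hvt := hv t ht.le
  nlinarith [pow_nonneg hvt 3]

theorem eq_zero_of_tendsto (hs : IsSolution β ω u v) (hωβ : ω < β) (hsum : 0 < ω + β)
    (hE : ∀ t, energy β ω (u t) (v t) = 0) {L V : ℝ} (hL : Tendsto u atTop (𝓝 L))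
    (hV : Tendsto v atTop (𝓝 V)) : L = 0 ∧ V = 0 := by
  have hu' := eq_zero_of_tendsto_deriv_atTop hs.hasDerivAt_u hL
    ((hV.const_mul _).sub (hV.pow 3))
  have hv' := eq_zero_of_tendsto_deriv_atTop hs.hasDerivAt_v hV
    ((hL.const_mul _).add (hL.pow 3))
  have hV0 : V = 0 := by nlinarith [sq_nonneg V]
  have hcont : Continuous fun p : ℝ × ℝ => energy β ω p.1 p.2 := by unfold energy; fun_prop
  have hEL : energy β ω L V = 0 := tendsto_nhds_unique
    (((hcont.tendsto (L, V)).comp (hL.prodMk_nhds hV)).congr hE) tendsto_const_nhds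
  refine ⟨?_, hV0⟩
  rcases energy_zero_right_eq_zero_iff.1 (hV0 ▸ hEL) with h | h
  · exact pow_eq_zero_iff two_ne_zero |>.1 h
  · nlinarith

theorem tendsto_atTop (hs : IsSolution β ω u v) (hωβ : ω < β) (hsum : 0 < ω + β)
    (hu₀ : u 0 = √(2 * (β - ω))) (hv₀ : v 0 = 0) :
    Tendsto u atTop (𝓝 0) ∧ Tendsto v atTop (𝓝 0) := by
  have hE : ∀ t, energy β ω (u t) (v t) = 0 := fun t => by
    rw [hs.energy_eq t 0, hu₀, hv₀, energy_sqrt_zero hωβ.le]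
  have hu := hs.u_pos hωβ.le hsum hE (hu₀ ▸ Real.sqrt_pos.2 (by linarith))
  have hv := fun t (ht : t ≥ 0) => hs.v_nonneg hωβ hE hu hv₀ ht
  obtain ⟨L, hL⟩ := (hs.antitoneOn_u hsum.le hv).exists_tendsto_atTop
    ⟨0, forall_mem_image.2 fun t _ => (hu t).le⟩
  obtain ⟨V, hV⟩ := exists_tendsto_of_tendsto_of_energy_eq_zero hsum.le hE hv hL
  obtain ⟨rfl, rfl⟩ := hs.eq_zero_of_tendsto hωβ hsum hE hL hV
  exact ⟨hL, hV⟩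

end IsSolution

end QuarticHamiltonian

theorem homoclinic_orbit_general (β ω : ℝ) (hω : 0 < ω) (hωβ : ω < β)
    (u v : ℝ → ℝ) (hu : ContDiff ℝ 1 u) (hv : ContDiff ℝ 1 v)
    (hu' : ∀ x : ℝ, deriv u x = -(ω + β) * v x - (v x) ^ 3)
    (hv' : ∀ x : ℝ, deriv v x = (ω - β) * u x + (u x) ^ 3)
    (hu0 : u 0 = Real.sqrt (2 * (β - ω))) (hv0 : v 0 = 0) :
    Tendsto (fun x => (u x, v x)) atTop (𝓝 ((0 : ℝ), (0 : ℝ))) ∧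
    Tendsto (fun x => (u x, v x)) atBot (𝓝 ((0 : ℝ), (0 : ℝ))) := by
  have hs : QuarticHamiltonian.IsSolution β ω u v :=
    ⟨fun x => hu' x ▸ (hu.differentiable one_ne_zero x).hasDerivAt,
      fun x => hv' x ▸ (hv.differentiable one_ne_zero x).hasDerivAt⟩
  have hsum : 0 < ω + β := by linarith
  obtain ⟨hu_top, hv_top⟩ := hs.tendsto_atTop hωβ hsum hu0 hv0
  obtain ⟨hu_bot, hv_bot⟩ :=
    hs.comp_neg.tendsto_atTop hωβ hsum (by simpa using hu0) (by simp [hv0])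
  have hu_bot' := hu_bot.comp tendsto_neg_atBot_atTop
  have hv_bot' := (hv_bot.comp tendsto_neg_atBot_atTop).neg
  simp only [Function.comp_def, neg_neg, neg_zero] at hu_bot' hv_bot'
  exact ⟨hu_top.prodMk_nhds hv_top, hu_bot'.prodMk_nhds hv_bot'⟩

/-- Every `C¹` solution of the Hamiltonian system `u' = −(ω+β)v − v³`, `v' = (ω−β)u + u³`
with initial condition `u(0) = √(2(β−ω))`, `v(0) = 0` is a homoclinic orbit to the origin:
`(u(x), v(x)) → (0,0)` as `x → ±∞`. -/
theorem homoclinic_orbit (β ω : ℝ) (hβ : 0 < β) (hω : 0 < ω) (hωβ : ω < β)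
    (u v : ℝ → ℝ) (hu : ContDiff ℝ 1 u) (hv : ContDiff ℝ 1 v)
    (hu' : ∀ x : ℝ, deriv u x = -(ω + β) * v x - (v x) ^ 3)
    (hv' : ∀ x : ℝ, deriv v x = (ω - β) * u x + (u x) ^ 3)
    (hu0 : u 0 = Real.sqrt (2 * (β - ω))) (hv0 : v 0 = 0) :
    Tendsto (fun x => (u x, v x)) atTop (𝓝 ((0 : ℝ), (0 : ℝ))) ∧
    Tendsto (fun x => (u x, v x)) atBot (𝓝 ((0 : ℝ), (0 : ℝ))) :=
  homoclinic_orbit_general β ω hω hωβ u v hu hv hu' hv' hu0 hv0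
end

section
/- Let β > 0 and 0 < ω < β. Every continuously differentiable solution (u, v) : ℝ → ℝ² of the Hamiltonian system u'(x) = −(ω+β)v(x) − v(x)³, v'(x) = (ω−β)u(x) + u(x)³ with initial condition u(0) = √(2(β−ω)), v(0) = 0 satisfies u(x)² > v(x)² for all x ∈ ℝ. -/
/-!
The Hamiltonian is conserved, so the orbit stays on `{H = 0}`. There
`2β(u² − v²) = (u⁴ + v⁴)/2 + ω(u² + v²)`, which is positive away from the origin, and
`u² + v² ≤ 4β`. The latter bound gives `|(u² + v²)'| ≤ 6β(u² + v²)`, so by a Grönwall argument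
`u² + v²` never vanishes.
-/

open Real

theorem pos_of_neg_mul_le_deriv {f f' : ℝ → ℝ} {K a x : ℝ} (hf : ∀ t, HasDerivAt f (f' t) t)
    (hbound : ∀ t, -(K * f t) ≤ f' t) (ha : 0 < f a) (hax : a ≤ x) : 0 < f x := by
  have hg : ∀ t, HasDerivAt (fun s => f s * exp (K * s)) ((f' t + K * f t) * exp (K * t)) t :=
    fun t => ((hf t).mul ((hasDerivAt_id t).const_mul K).exp).congr_deriv (by simp; ring)
  have hmono : Monotone fun s => f s * exp (K * s) :=
    monotone_of_deriv_nonneg (fun t => (hg t).differentiableAt) fun t => by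
      rw [(hg t).deriv]
      exact mul_nonneg (by linarith [hbound t]) (exp_pos _).le
  exact pos_of_mul_pos_left ((mul_pos ha (exp_pos _)).trans_le (hmono hax)) (exp_pos _).le

theorem pos_of_abs_deriv_le_mul {f f' : ℝ → ℝ} {K a : ℝ} (hf : ∀ t, HasDerivAt f (f' t) t)
    (hbound : ∀ t, |f' t| ≤ K * f t) (ha : 0 < f a) (x : ℝ) : 0 < f x := by
  rcases le_total a x with hax | hxa
  · exact pos_of_neg_mul_le_deriv hf (fun t => neg_le_of_abs_le (hbound t)) ha hax
  · have hf_neg : ∀ t, HasDerivAt (fun s => f (-s)) (-f' (-t)) t := fun t => by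
      simpa [Function.comp_def] using (hf (-t)).comp t (hasDerivAt_neg t)
    have hbound_neg : ∀ t, -(K * f (-t)) ≤ -f' (-t) := fun t =>
      neg_le_neg (le_of_abs_le (hbound (-t)))
    simpa using pos_of_neg_mul_le_deriv hf_neg hbound_neg (by simpa using ha) (neg_le_neg hxa)

noncomputable def hamiltonian (β ω u v : ℝ) : ℝ :=
  (u ^ 4 + v ^ 4) / 4 + β / 2 * (v ^ 2 - u ^ 2) + ω / 2 * (u ^ 2 + v ^ 2)

theorem hamiltonian_sqrt_zero_eq_zero {β ω : ℝ} (h : ω ≤ β) :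
    hamiltonian β ω (√(2 * (β - ω))) 0 = 0 := by
  have hsq : √(2 * (β - ω)) ^ 2 = 2 * (β - ω) := sq_sqrt (by linarith)
  rw [hamiltonian, show √(2 * (β - ω)) ^ 4 = (√(2 * (β - ω)) ^ 2) ^ 2 by ring, hsq]
  ring

theorem sq_add_sq_le_of_hamiltonian_eq_zero {β ω u v : ℝ} (hβ : 0 ≤ β) (hω : 0 ≤ ω)
    (h : hamiltonian β ω u v = 0) : u ^ 2 + v ^ 2 ≤ 4 * β := by
  unfold hamiltonian at h
  by_contra! hlt
  nlinarith [sq_nonneg (u ^ 2 - v ^ 2), mul_pos (by linarith : 0 < u ^ 2 + v ^ 2) (sub_pos.2 hlt),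
    mul_nonneg hω (add_nonneg (sq_nonneg u) (sq_nonneg v)), mul_nonneg hβ (sq_nonneg v)]

theorem sq_lt_sq_of_hamiltonian_eq_zero {β ω u v : ℝ} (hβ : 0 < β) (hω : 0 < ω)
    (h : hamiltonian β ω u v = 0) (hpos : 0 < u ^ 2 + v ^ 2) : v ^ 2 < u ^ 2 := by
  unfold hamiltonian at h
  have : 0 < β * (u ^ 2 - v ^ 2) := by
    nlinarith [mul_pos hω hpos, pow_nonneg (sq_nonneg u) 2, pow_nonneg (sq_nonneg v) 2]
  nlinarith [(mul_pos_iff_of_pos_left hβ).mp this]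

theorem abs_two_mul_mul_sub_le {β u v : ℝ} (hβ : 0 ≤ β) (h : u ^ 2 + v ^ 2 ≤ 4 * β) :
    |2 * u * v * (u ^ 2 - v ^ 2 - 2 * β)| ≤ 6 * β * (u ^ 2 + v ^ 2) := by
  have h₁ : |2 * u * v| ≤ u ^ 2 + v ^ 2 := by
    rw [abs_le]; constructor <;> nlinarith [sq_nonneg (u + v), sq_nonneg (u - v)]
  have h₂ : |u ^ 2 - v ^ 2 - 2 * β| ≤ 6 * β := by
    rw [abs_le]; constructor <;> nlinarith [sq_nonneg u, sq_nonneg v]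
  calc |2 * u * v * (u ^ 2 - v ^ 2 - 2 * β)| = |2 * u * v| * |u ^ 2 - v ^ 2 - 2 * β| := abs_mul _ _
    _ ≤ (u ^ 2 + v ^ 2) * (6 * β) := mul_le_mul h₁ h₂ (abs_nonneg _) (by positivity)
    _ = 6 * β * (u ^ 2 + v ^ 2) := mul_comm _ _

section Flow

variable {β ω : ℝ} {u v : ℝ → ℝ}

theorem hasDerivAt_hamiltonian_comp
    (hu : ∀ x, HasDerivAt u (-(ω + β) * v x - v x ^ 3) x)
    (hv : ∀ x, HasDerivAt v ((ω - β) * u x + u x ^ 3) x) (x : ℝ) :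
    HasDerivAt (fun t => hamiltonian β ω (u t) (v t)) 0 x :=
  (((((hu x).pow 4).add ((hv x).pow 4)).div_const 4).add
    ((((hv x).pow 2).sub ((hu x).pow 2)).const_mul (β / 2)) |>.add
    ((((hu x).pow 2).add ((hv x).pow 2)).const_mul (ω / 2))).congr_deriv (by push_cast; ring)

theorem hamiltonian_comp_eq
    (hu : ∀ x, HasDerivAt u (-(ω + β) * v x - v x ^ 3) x)
    (hv : ∀ x, HasDerivAt v ((ω - β) * u x + u x ^ 3) x) (x : ℝ) :
    hamiltonian β ω (u x) (v x) = hamiltonian β ω (u 0) (v 0) :=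
  is_const_of_deriv_eq_zero (fun t => (hasDerivAt_hamiltonian_comp hu hv t).differentiableAt)
    (fun t => (hasDerivAt_hamiltonian_comp hu hv t).deriv) x 0

theorem hasDerivAt_sq_add_sq_comp
    (hu : ∀ x, HasDerivAt u (-(ω + β) * v x - v x ^ 3) x)
    (hv : ∀ x, HasDerivAt v ((ω - β) * u x + u x ^ 3) x) (x : ℝ) :
    HasDerivAt (fun t => u t ^ 2 + v t ^ 2) (2 * u x * v x * (u x ^ 2 - v x ^ 2 - 2 * β)) x :=
  (((hu x).pow 2).add ((hv x).pow 2)).congr_deriv (by push_cast; ring)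

theorem sq_add_sq_pos_of_hamiltonian_eq_zero (hβ : 0 ≤ β) (hω : 0 ≤ ω)
    (hu : ∀ x, HasDerivAt u (-(ω + β) * v x - v x ^ 3) x)
    (hv : ∀ x, HasDerivAt v ((ω - β) * u x + u x ^ 3) x)
    (hH : hamiltonian β ω (u 0) (v 0) = 0) (h₀ : 0 < u 0 ^ 2 + v 0 ^ 2) (x : ℝ) :
    0 < u x ^ 2 + v x ^ 2 :=
  pos_of_abs_deriv_le_mul (hasDerivAt_sq_add_sq_comp hu hv)
    (fun t => abs_two_mul_mul_sub_le hβ <| sq_add_sq_le_of_hamiltonian_eq_zero hβ hω <|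
      (hamiltonian_comp_eq hu hv t).trans hH) h₀ x

end Flow

/-- Every `C¹` solution of the Hamiltonian system `u' = −(ω+β)v − v³`, `v' = (ω−β)u + u³`
with initial condition `u(0) = √(2(β−ω))`, `v(0) = 0` satisfies `u(x)² > v(x)²` for all `x`. -/
theorem orbit_confined (β ω : ℝ) (hβ : 0 < β) (hω : 0 < ω) (hωβ : ω < β)
    (u v : ℝ → ℝ) (hu : ContDiff ℝ 1 u) (hv : ContDiff ℝ 1 v)
    (hu' : ∀ x : ℝ, deriv u x = -(ω + β) * v x - (v x) ^ 3)
    (hv' : ∀ x : ℝ, deriv v x = (ω - β) * u x + (u x) ^ 3)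
    (hu0 : u 0 = Real.sqrt (2 * (β - ω))) (hv0 : v 0 = 0) :
    ∀ x : ℝ, (v x) ^ 2 < (u x) ^ 2 := by
  have hU : ∀ x, HasDerivAt u (-(ω + β) * v x - v x ^ 3) x := fun x =>
    hu' x ▸ (hu.differentiable one_ne_zero x).hasDerivAt
  have hV : ∀ x, HasDerivAt v ((ω - β) * u x + u x ^ 3) x := fun x =>
    hv' x ▸ (hv.differentiable one_ne_zero x).hasDerivAt
  have hH₀ : hamiltonian β ω (u 0) (v 0) = 0 := by
    rw [hu0, hv0]; exact hamiltonian_sqrt_zero_eq_zero hωβ.le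
  have hE₀ : 0 < u 0 ^ 2 + v 0 ^ 2 := by
    rw [hu0, hv0, sq_sqrt (by linarith)]; linarith
  intro x
  have hH : hamiltonian β ω (u x) (v x) = 0 := (hamiltonian_comp_eq hU hV x).trans hH₀
  exact sq_lt_sq_of_hamiltonian_eq_zero hβ hω hH
    (sq_add_sq_pos_of_hamiltonian_eq_zero hβ.le hω.le hU hV hH₀ hE₀ x)
end

section
/- Let c > 0, a ∈ ℝ, and let f : [a, ∞) → ℝ be continuous on [a, ∞) and twice differentiable on (a, ∞), with f(a) ≤ 0, f(x) → 0 as x → +∞, and f''(x) ≥ c² f(x) for all x > a. Then f(x) ≤ 0 for all x ≥ a. -/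
/-!
If `f` were positive somewhere, its decay at infinity would give it a maximum over `[a, ∞)`, and
`f a ≤ 0` puts that maximum at an interior point `m` with `f m > 0`. There
`f'' m ≥ c² f m > 0`, while the second derivative at an interior maximum is nonpositive.
-/

open Filter Topology Set

theorem ContinuousOn.exists_isMaxOn_Ici {α β : Type*} [LinearOrder α] [TopologicalSpace α]
    [ClosedIciTopology α] [LinearOrder β] [TopologicalSpace β] [OrderClosedTopology β]
    [CompactIccSpace β] [NoMinOrder β] {f : β → α} {a x₀ : β} (hf : ContinuousOn f (Ici a))
    (h₀ : a ≤ x₀) (htop : ∀ᶠ x in atTop, f x ≤ f x₀) : ∃ m, a ≤ m ∧ IsMaxOn f (Ici a) m := by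
  refine hf.exists_isMaxOn' isClosed_Ici h₀ (eventually_inf_principal.mpr ?_)
  refine cocompact_le_atBot_atTop (eventually_sup.mpr ⟨?_, htop.mono fun x hx _ => hx⟩)
  exact (eventually_lt_atBot a).mono fun x hxa hax => absurd hax (not_le.mpr hxa)

theorem IsLocalMax.second_deriv_nonpos {f f' : ℝ → ℝ} {m f'' : ℝ} (hmax : IsLocalMax f m)
    (hf : ∀ᶠ x in 𝓝 m, HasDerivAt f (f' x) x) (hf' : HasDerivAt f' f'' m) : f'' ≤ 0 := by
  by_contra! hpos
  have hzero : f' m = 0 := hmax.hasDerivAt_eq_zero hf.self_of_nhds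
  have hslope : ∀ᶠ x in 𝓝[>] m, 0 < slope f' m x :=
    ((hasDerivAt_iff_tendsto_slope.mp hf').eventually (eventually_gt_nhds hpos)).filter_mono
      (nhdsGT_le_nhdsNE m)
  obtain ⟨u, hmu : m < u, hsub⟩ := mem_nhdsGT_iff_exists_Ioo_subset.mp
    (((hf.and hmax).filter_mono nhdsWithin_le_nhds).and hslope)
  -- `f' m = 0 < f''` makes `f'` positive just right of `m`, so `f` increases there
  obtain ⟨x, hmx, hxu⟩ := exists_between hmu
  have hcont : ContinuousOn f (Icc m x) := fun y hy =>
    hy.1.eq_or_lt.elim (fun h => h ▸ hf.self_of_nhds.continuousAt.continuousWithinAt)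
      fun h => (hsub ⟨h, hy.2.trans_lt hxu⟩).1.1.continuousAt.continuousWithinAt
  have hmono : StrictMonoOn f (Icc m x) := by
    refine strictMonoOn_of_hasDerivWithinAt_pos (f' := f') (convex_Icc m x) hcont
      (fun y hy => ?_) fun y hy => ?_ <;> rw [interior_Icc] at hy
    · exact (hsub ⟨hy.1, hy.2.trans hxu⟩).1.1.hasDerivWithinAt
    · exact pos_of_slope_pos hy.1 (hsub ⟨hy.1, hy.2.trans hxu⟩).2 hzero
  exact (hmono (left_mem_Icc.mpr hmx.le) (right_mem_Icc.mpr hmx.le) hmx).not_ge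
    (hsub ⟨hmx, hxu⟩).1.2

/-- Comparison principle: if `f` is continuous on `[a,∞)`, twice differentiable on `(a,∞)`,
with `f(a) ≤ 0`, `f(x) → 0` as `x → ∞` and `f'' ≥ c² f` on `(a,∞)` for some `c > 0`,
then `f ≤ 0` on `[a,∞)`. -/
theorem comparison_principle (c a : ℝ) (hc : 0 < c) (f f' f'' : ℝ → ℝ)
    (hcont : ContinuousOn f (Ici a))
    (hder1 : ∀ x, a < x → HasDerivAt f (f' x) x)
    (hder2 : ∀ x, a < x → HasDerivAt f' (f'' x) x)
    (hfa : f a ≤ 0)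
    (hlim : Tendsto f atTop (𝓝 0))
    (hineq : ∀ x, a < x → c ^ 2 * f x ≤ f'' x) :
    ∀ x, a ≤ x → f x ≤ 0 := by
  by_contra! ⟨x₀, hax₀, hx₀⟩
  obtain ⟨m, ham_le, hmax⟩ := hcont.exists_isMaxOn_Ici hax₀
    ((hlim.eventually (eventually_lt_nhds hx₀)).mono fun _ => le_of_lt)
  have hfm : 0 < f m := hx₀.trans_le (hmax hax₀)
  have ham : a < m := ham_le.lt_of_ne (by rintro rfl; linarith)
  have hlocmax : IsLocalMax f m := mem_of_superset (Ici_mem_nhds ham) hmax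
  have hnonpos := hlocmax.second_deriv_nonpos
    (eventually_of_mem (Ioi_mem_nhds ham) hder1) (hder2 m ham)
  nlinarith [hineq m ham, pow_pos hc 2]
end

section
/- (Bihari inequality) Let u, f : [0, ∞) → [0, ∞) be continuous functions, let w : [0, ∞) → [0, ∞) be continuous and nondecreasing with w(y) > 0 for all y > 0, and let M > 0. Suppose that u(t) ≤ M + ∫₀ᵗ f(s) w(u(s)) ds for all t ≥ 0. Then for every t ≥ 0 and every x ≥ M such that ∫₀ᵗ f(s) ds ≤ ∫_M^x dy / w(y), one has u(t) ≤ x. -/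
open Set intervalIntegral MeasureTheory

/-!
Put `V t = M + ∫₀ᵗ f(s) w(u(s)) ds`, so that `u ≤ V` and, `w` being nondecreasing,
`V' = f · w(u) ≤ f · w(V)`. With `G z = ∫_M^z dy / w(y)`, the substitution `y = V(s)` gives
`G(V t) = ∫₀ᵗ V'(s) / w(V s) ds ≤ ∫₀ᵗ f ≤ G x`, and `G` is strictly increasing on `[M, ∞)`,
hence `u t ≤ V t ≤ x`.
-/

theorem strictMonoOn_integral_of_pos {g : ℝ → ℝ} {s : Set ℝ} {a : ℝ} (hs : s.OrdConnected)
    (ha : a ∈ s) (hg : ContinuousOn g s) (hpos : ∀ y ∈ s, 0 < g y) :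
    StrictMonoOn (fun z => ∫ y in a..z, g y) s := by
  have hint : ∀ p ∈ s, ∀ q ∈ s, IntervalIntegrable g volume p q := fun p hp q hq =>
    (hg.mono (hs.uIcc_subset hp hq)).intervalIntegrable
  intro x hx y hy hxy
  rw [← sub_pos, integral_interval_sub_left (hint a ha y hy) (hint a ha x hx)]
  exact intervalIntegral_pos_of_pos_on (hint x hx y hy)
    (fun z hz => hpos z (hs.out hx hy (Ioo_subset_Icc_self hz))) hxy

theorem integral_inv_le_integral_of_deriv_le_mul {V V' f w : ℝ → ℝ} {a b : ℝ} (hab : a ≤ b)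
    (hV : ContinuousOn V (Icc a b)) (hV' : ∀ s ∈ Ioo a b, HasDerivWithinAt V (V' s) (Ioi s) s)
    (hV'_cont : ContinuousOn V' (Icc a b)) (hf : IntervalIntegrable f volume a b)
    (hw : ContinuousOn w (V '' Icc a b)) (hw_pos : ∀ s ∈ Icc a b, 0 < w (V s))
    (hle : ∀ s ∈ Icc a b, V' s ≤ f s * w (V s)) :
    ∫ y in V a..V b, (w y)⁻¹ ≤ ∫ s in a..b, f s := by
  have hw_inv : ContinuousOn (fun y => (w y)⁻¹) (V '' Icc a b) :=
    hw.inv₀ (by rintro _ ⟨s, hs, rfl⟩; exact (hw_pos s hs).ne')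
  have hsubst := integral_deriv_smul_comp'' (uIcc_of_le hab ▸ hV)
    (by rwa [min_eq_left hab, max_eq_right hab]) (uIcc_of_le hab ▸ hV'_cont)
    (uIcc_of_le hab ▸ hw_inv)
  rw [← hsubst]
  refine integral_mono_on hab ?_ hf fun s hs => ?_
  · exact (hV'_cont.mul (hw_inv.comp hV (mapsTo_image V _))).intervalIntegrable_of_Icc hab
  · rw [smul_eq_mul, Function.comp_apply, mul_inv_le_iff₀ (hw_pos s hs)]
    exact hle s hs

theorem integral_inv_le_integral_of_le_mul_primitive {g f w : ℝ → ℝ} {a b m : ℝ} (hab : a ≤ b)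
    (hg : ContinuousOn g (Icc a b)) (hf : IntervalIntegrable f volume a b)
    (hw : ContinuousOn w ((fun s => m + ∫ r in a..s, g r) '' Icc a b))
    (hw_pos : ∀ s ∈ Icc a b, 0 < w (m + ∫ r in a..s, g r))
    (hle : ∀ s ∈ Icc a b, g s ≤ f s * w (m + ∫ r in a..s, g r)) :
    ∫ y in m..m + ∫ r in a..b, g r, (w y)⁻¹ ≤ ∫ s in a..b, f s := by
  have hV : ContinuousOn (fun s => m + ∫ r in a..s, g r) (Icc a b) := by
    have := continuousOn_primitive_interval' (hg.intervalIntegrable_of_Icc (μ := volume) hab)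
      left_mem_uIcc
    exact continuousOn_const.add (uIcc_of_le hab ▸ this)
  have hV' (s : ℝ) (hs : s ∈ Ioo a b) :
      HasDerivWithinAt (fun s => m + ∫ r in a..s, g r) (g s) (Ioi s) s := by
    have hg_at : ContinuousAt g s := hg.continuousAt (Icc_mem_nhds hs.1 hs.2)
    refine ((integral_hasDerivAt_right ?_ ?_ hg_at).const_add m).hasDerivWithinAt
    · exact (hg.mono (Icc_subset_Icc_right hs.2.le)).intervalIntegrable_of_Icc hs.1.le
    · exact (hg.mono Ioo_subset_Icc_self).stronglyMeasurableAtFilter isOpen_Ioo s hs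
  simpa using integral_inv_le_integral_of_deriv_le_mul hab hV hV' hg hf hw hw_pos hle

/-- Bihari's inequality: if `u(t) ≤ M + ∫₀ᵗ f(s) w(u(s)) ds` on `[0,∞)` with `u, f ≥ 0`
continuous, `w` continuous, nondecreasing, positive on `(0,∞)`, and `M > 0`, then
`u(t) ≤ x` for every `x ≥ M` such that `∫₀ᵗ f(s) ds ≤ ∫_M^x dy / w(y)`. -/
theorem bihari_inequality (u f w : ℝ → ℝ) (M : ℝ) (hM : 0 < M)
    (hu_cont : ContinuousOn u (Ici 0)) (hu_nonneg : ∀ t ∈ Ici (0 : ℝ), 0 ≤ u t)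
    (hf_cont : ContinuousOn f (Ici 0)) (hf_nonneg : ∀ t ∈ Ici (0 : ℝ), 0 ≤ f t)
    (hw_cont : ContinuousOn w (Ici 0)) (hw_mono : MonotoneOn w (Ici 0))
    (hw_nonneg : ∀ y ∈ Ici (0 : ℝ), 0 ≤ w y) (hw_pos : ∀ y : ℝ, 0 < y → 0 < w y)
    (hineq : ∀ t : ℝ, 0 ≤ t → u t ≤ M + ∫ s in (0:ℝ)..t, f s * w (u s)) :
    ∀ t : ℝ, 0 ≤ t → ∀ x : ℝ, M ≤ x →
      (∫ s in (0:ℝ)..t, f s) ≤ (∫ y in M..x, 1 / w y) → u t ≤ x := by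
  intro t ht x hx hint
  set g := fun s => f s * w (u s)
  have hg : ContinuousOn g (Ici 0) := hf_cont.mul (hw_cont.comp hu_cont hu_nonneg)
  set V := fun t => M + ∫ s in (0:ℝ)..t, g s
  have hM_le_V : ∀ s ∈ Ici (0:ℝ), M ≤ V s := fun s hs => le_add_of_nonneg_right <|
    integral_nonneg hs fun r hr => mul_nonneg (hf_nonneg r hr.1) (hw_nonneg _ (hu_nonneg r hr.1))
  have hw_pos_M : ∀ y ∈ Ici M, 0 < w y := fun y hy => hw_pos y (hM.trans_le hy)
  have hVt : ∫ y in M..V t, (w y)⁻¹ ≤ ∫ s in (0:ℝ)..t, f s := by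
    refine integral_inv_le_integral_of_le_mul_primitive ht (hg.mono Icc_subset_Ici_self)
      ((hf_cont.mono Icc_subset_Ici_self).intervalIntegrable_of_Icc ht) (hw_cont.mono ?_)
      (fun s hs => hw_pos_M _ (hM_le_V s hs.1)) fun s hs => ?_
    · rintro _ ⟨s, hs, rfl⟩
      exact hM.le.trans (hM_le_V s hs.1)
    · exact mul_le_mul_of_nonneg_left (hw_mono (hu_nonneg s hs.1)
        (hM.le.trans (hM_le_V s hs.1)) (hineq s hs.1)) (hf_nonneg s hs.1)
  have hVt_le : V t ≤ x :=
    ((strictMonoOn_integral_of_pos (g := fun y => (w y)⁻¹) ordConnected_Ici self_mem_Ici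
      ((hw_cont.mono (Ici_subset_Ici.2 hM.le)).inv₀ fun y hy => (hw_pos_M y hy).ne')
      fun y hy => inv_pos.2 (hw_pos_M y hy)).le_iff_le (hM_le_V t ht) hx).1
      (hVt.trans (by simpa only [one_div] using hint))
  exact (hineq t ht).trans hVt_le
end

section
/- (Discrete uniform Sobolev inequality) Let h > 0 and let g : [−π, π] → ℂ be measurable with ∫_{−π}^{π} (1 + h⁻²|ξ|²) |g(ξ)|² dξ < ∞. Define u : ℤ → ℂ by the Fourier inversion formula u(n) = (1/√(2π)) ∫_{−π}^{π} g(ξ) e^{inξ} dξ. Then for every n ∈ ℤ, |u(n)| ≤ (√2/2) · ( h ∫_{−π}^{π} (1 + h⁻²|ξ|²) |g(ξ)|² dξ )^{1/2}. -/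
open Real MeasureTheory

/-!
Since `|e^{inξ}| = 1`, `|u(n)| ≤ (2π)^{-1/2} ∫ |g|`. Cauchy–Schwarz against the weight
`w(ξ) = 1 + h⁻²ξ²` gives `∫ |g| ≤ (∫ w⁻¹)^{1/2} (∫ w |g|²)^{1/2}`, and
`∫_{-π}^{π} w⁻¹ ≤ ∫_ℝ (1 + (ξ/h)²)⁻¹ dξ = πh`, so `|u(n)|² ≤ (πh / 2π) ∫ w |g|²`.
-/

theorem norm_integral_mul_exp_mul_I_le {μ : Measure ℝ} (g : ℝ → ℂ) (t : ℝ) :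
    ‖∫ ξ, g ξ * Complex.exp (Complex.I * t * ξ) ∂μ‖ ≤ ∫ ξ, ‖g ξ‖ ∂μ := by
  refine (norm_integral_le_integral_norm _).trans_eq (integral_congr_ae (.of_forall fun ξ ↦ ?_))
  dsimp only
  have hphase : Complex.I * t * ξ = ↑(t * ξ) * Complex.I := by push_cast; ring
  rw [norm_mul, hphase, Complex.norm_exp_ofReal_mul_I, mul_one]

theorem integral_mul_le_sqrt_mul_sqrt_of_nonneg {α : Type*} [MeasurableSpace α] {μ : Measure α}
    {f g : α → ℝ} (hf_nonneg : 0 ≤ᵐ[μ] f) (hg_nonneg : 0 ≤ᵐ[μ] g) (hf : MemLp f 2 μ)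
    (hg : MemLp g 2 μ) :
    ∫ x, f x * g x ∂μ ≤ √(∫ x, f x ^ 2 ∂μ) * √(∫ x, g x ^ 2 ∂μ) := by
  have h2 : ENNReal.ofReal 2 = 2 := by norm_num
  have := integral_mul_le_Lp_mul_Lq_of_nonneg Real.HolderConjugate.two_two hf_nonneg hg_nonneg
    (h2 ▸ hf) (h2 ▸ hg)
  simpa only [Real.rpow_two, sqrt_eq_rpow, one_div] using this

theorem integral_norm_le_sqrt_mul_sqrt_weighted {α E : Type*}
    [MeasurableSpace α] [NormedAddCommGroup E] {μ : Measure α} {f : α → E} {w : α → ℝ}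
    (hf : AEStronglyMeasurable f μ) (hw : ∀ x, 0 < w x) (hw_inv : Integrable (fun x ↦ (w x)⁻¹) μ)
    (hwf : Integrable (fun x ↦ w x * ‖f x‖ ^ 2) μ) :
    ∫ x, ‖f x‖ ∂μ ≤ √(∫ x, (w x)⁻¹ ∂μ) * √(∫ x, w x * ‖f x‖ ^ 2 ∂μ) := by
  have hw_meas : AEMeasurable w μ := by
    simpa only [Pi.inv_def, inv_inv] using hw_inv.aemeasurable.inv
  have hsplit : ∀ x, ‖f x‖ = (√(w x))⁻¹ * (√(w x) * ‖f x‖) := fun x ↦ by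
    rw [← mul_assoc, inv_mul_cancel₀ (sqrt_pos.2 (hw x)).ne', one_mul]
  have hsq_inv : ∀ x, (√(w x))⁻¹ ^ 2 = (w x)⁻¹ := fun x ↦ by
    rw [inv_pow, sq_sqrt (hw x).le]
  have hsq : ∀ x, (√(w x) * ‖f x‖) ^ 2 = w x * ‖f x‖ ^ 2 := fun x ↦ by
    rw [mul_pow, sq_sqrt (hw x).le]
  have hmem_inv : MemLp (fun x ↦ (√(w x))⁻¹) 2 μ :=
    (memLp_two_iff_integrable_sq hw_meas.sqrt.inv.aestronglyMeasurable).2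
      (by simpa only [Pi.inv_apply, hsq_inv] using hw_inv)
  have hmem : MemLp (fun x ↦ √(w x) * ‖f x‖) 2 μ :=
    (memLp_two_iff_integrable_sq (hw_meas.sqrt.aestronglyMeasurable.mul hf.norm)).2
      (by simpa only [Pi.mul_apply, hsq] using hwf)
  have hCS := integral_mul_le_sqrt_mul_sqrt_of_nonneg (.of_forall fun x ↦ by positivity)
    (.of_forall fun x ↦ by positivity) hmem_inv hmem
  simp only [hsq_inv, hsq] at hCS
  exact (integral_congr_ae (.of_forall hsplit)).trans_le hCS

theorem integral_inv_one_add_inv_sq_mul_sq (a : ℝ) :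
    ∫ ξ : ℝ, (1 + a⁻¹ ^ 2 * ξ ^ 2)⁻¹ = |a| * π := by
  simp_rw [← mul_pow]
  rw [Measure.integral_comp_inv_mul_left (fun ξ ↦ (1 + ξ ^ 2)⁻¹), integral_univ_inv_one_add_sq,
    smul_eq_mul]

theorem integrable_inv_one_add_inv_sq_mul_sq {a : ℝ} (ha : a ≠ 0) :
    Integrable fun ξ : ℝ ↦ (1 + a⁻¹ ^ 2 * ξ ^ 2)⁻¹ := by
  simp_rw [← mul_pow]
  exact integrable_inv_one_add_sq.comp_mul_left' (inv_ne_zero ha)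

/-- Discrete uniform Sobolev inequality: if `u : ℤ → ℂ` is given by Fourier inversion
`u(n) = (2π)^{-1/2} ∫_{−π}^{π} g(ξ) e^{inξ} dξ`, then
`|u(n)| ≤ (√2/2) (h ∫_{−π}^{π} (1 + h⁻²ξ²)|g(ξ)|² dξ)^{1/2}` for all `n`, uniformly in `h > 0`. -/
theorem discrete_sobolev (h : ℝ) (hh : 0 < h) (g : ℝ → ℂ) (hg : Measurable g)
    (hint : IntegrableOn (fun ξ : ℝ => (1 + h⁻¹ ^ 2 * ξ ^ 2) * ‖g ξ‖ ^ 2)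
      (Set.Icc (-π) π) volume)
    (u : ℤ → ℂ)
    (hu : ∀ n : ℤ, u n = (1 / Real.sqrt (2 * π) : ℂ) *
      ∫ ξ in Set.Icc (-π) π, g ξ * Complex.exp (Complex.I * (n : ℂ) * (ξ : ℂ))) :
    ∀ n : ℤ, ‖u n‖ ≤ (Real.sqrt 2 / 2) *
      Real.sqrt (h * ∫ ξ in Set.Icc (-π) π, (1 + h⁻¹ ^ 2 * ξ ^ 2) * ‖g ξ‖ ^ 2) := by
  intro n
  set B := ∫ ξ in Set.Icc (-π) π, (1 + h⁻¹ ^ 2 * ξ ^ 2) * ‖g ξ‖ ^ 2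
  have hw : ∀ ξ : ℝ, 0 < 1 + h⁻¹ ^ 2 * ξ ^ 2 := fun ξ ↦ by positivity
  have hw_inv := integrable_inv_one_add_inv_sq_mul_sq hh.ne'
  have hweight : ∫ ξ in Set.Icc (-π) π, (1 + h⁻¹ ^ 2 * ξ ^ 2)⁻¹ ≤ h * π := calc
    _ ≤ ∫ ξ, (1 + h⁻¹ ^ 2 * ξ ^ 2)⁻¹ :=
      setIntegral_le_integral hw_inv (.of_forall fun ξ ↦ (inv_pos.2 (hw ξ)).le)
    _ = h * π := by rw [integral_inv_one_add_inv_sq_mul_sq, abs_of_pos hh]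
  calc ‖u n‖
      = (√(2 * π))⁻¹ * ‖∫ ξ in Set.Icc (-π) π, g ξ * Complex.exp (Complex.I * n * ξ)‖ := by
        rw [hu n, norm_mul, one_div, norm_inv, Complex.norm_real, norm_of_nonneg (sqrt_nonneg _)]
    _ ≤ (√(2 * π))⁻¹ * ∫ ξ in Set.Icc (-π) π, ‖g ξ‖ := by
        gcongr
        exact_mod_cast norm_integral_mul_exp_mul_I_le g n
    _ ≤ (√(2 * π))⁻¹ * (√(∫ ξ in Set.Icc (-π) π, (1 + h⁻¹ ^ 2 * ξ ^ 2)⁻¹) * √B) := by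
        gcongr
        exact integral_norm_le_sqrt_mul_sqrt_weighted hg.aestronglyMeasurable
          hw hw_inv.integrableOn hint
    _ ≤ (√(2 * π))⁻¹ * (√(h * π) * √B) := by gcongr
    _ = √2 / 2 * √(h * B) := by
        have hsqrt2 : √2 ^ 2 = 2 := sq_sqrt zero_le_two
        rw [sqrt_mul zero_le_two, sqrt_mul hh.le, sqrt_mul hh.le]
        field_simp
        rw [hsqrt2, mul_comm]
end

section
/- Let f ∈ L²(ℝ, ℂ). For h > 0 let f_h : ℤ → ℂ be the discretization f_h(n) = (1/h)∫_{nh}^{(n+1)h} f(x) dx, and let p_h f_h : ℝ → ℂ be its piecewise linear interpolation, defined by (p_h f_h)(x) = f_h(n) + h⁻¹(f_h(n+1) − f_h(n))·(x − nh) for x ∈ [nh, (n+1)h). Then ‖p_h f_h − f‖_{L²(ℝ)} → 0 as h → 0⁺. -/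
/-!
The operator `f ↦ p_h f_h` is linear and bounded on `L²` uniformly in `h`: on each cell the
interpolant is a convex combination of two neighbouring averages, and Cauchy–Schwarz gives
`h ‖f_h(n)‖² ≤ ∫_{[nh, (n+1)h]} ‖f‖²`, whence `‖p_h f_h‖₂ ≤ 2 ‖f‖₂`. For a continuous compactly
supported `g`, the value `p_h g_h(x)` is a convex combination of averages of `g` over points within
`2h` of `x`, so `p_h g_h → g` uniformly with supports in a fixed compact set, hence in `L²`.
Density of such `g` in `L²` concludes.
-/

open MeasureTheory Filter Topology Set Metric
open scoped ENNReal

noncomputable section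

namespace LatticeInterpolation

lemma eLpNorm_two_sq {α F : Type*} [MeasurableSpace α] [NormedAddCommGroup F] (f : α → F)
    (μ : Measure α) : eLpNorm f 2 μ ^ 2 = ∫⁻ x, ‖f x‖ₑ ^ 2 ∂μ := by
  simpa [ENNReal.rpow_two] using eLpNorm_nnreal_pow_eq_lintegral (f := f) (μ := μ) two_ne_zero

theorem tendsto_eLpNorm_sub_of_tendstoUniformly {α ι F : Type*} [MeasurableSpace α]
    {μ : Measure α} [NormedAddCommGroup F] {p : ℝ≥0∞} (hp : p ≠ ∞) {l : Filter ι}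
    {G : ι → α → F} {g : α → F} {s : Set α} (hs : MeasurableSet s) (hμs : μ s ≠ ∞)
    (hG : TendstoUniformly G g l) (hGs : ∀ᶠ i in l, Function.support (G i) ⊆ s)
    (hgs : Function.support g ⊆ s) :
    Tendsto (fun i => eLpNorm (G i - g) p μ) l (𝓝 0) := by
  have hlim : Tendsto (fun c : ℝ => ENNReal.ofReal c * μ s ^ (1 / p.toReal)) (𝓝[>] 0)
      (𝓝 (ENNReal.ofReal 0 * μ s ^ (1 / p.toReal))) :=
    ENNReal.Tendsto.mul_const
      (ENNReal.tendsto_ofReal (tendsto_nhdsWithin_of_tendsto_nhds tendsto_id))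
      (Or.inr (ENNReal.rpow_ne_top_of_nonneg (one_div_nonneg.2 ENNReal.toReal_nonneg) hμs))
  rw [ENNReal.ofReal_zero, zero_mul] at hlim
  rw [ENNReal.tendsto_nhds_zero]
  intro ε hε
  obtain ⟨c, hcε, hc⟩ := ((hlim.eventually (eventually_le_nhds hε)).and self_mem_nhdsWithin).exists
  filter_upwards [Metric.tendstoUniformly_iff.1 hG c hc, hGs] with i hi hsi
  exact (eLpNorm_sub_le_of_dist_bdd μ hp hs (le_of_lt hc)
    (fun x => (dist_comm _ _).trans_le (hi x).le) hsi hgs).trans hcε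

variable {E : Type*} [NormedAddCommGroup E] [NormedSpace ℝ E] {h : ℝ}

def latticeAverage (h : ℝ) (f : ℝ → E) (n : ℤ) : E :=
  h⁻¹ • ∫ x in (n * h)..((n + 1) * h), f x

/-- `p_h u`, using `Int.fract (x / h) = (x - n h) / h` for `n = ⌊x / h⌋`. -/
def linearInterp (h : ℝ) (u : ℤ → E) (x : ℝ) : E :=
  (1 - Int.fract (x / h)) • u ⌊x / h⌋ + Int.fract (x / h) • u (⌊x / h⌋ + 1)

def interpolant (h : ℝ) (f : ℝ → E) : ℝ → E :=
  linearInterp h (latticeAverage h f)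

lemma floor_div_eq_iff (hh : 0 < h) {n : ℤ} {x : ℝ} :
    ⌊x / h⌋ = n ↔ x ∈ Ico (n * h) ((n + 1) * h) := by
  rw [Int.floor_eq_iff, le_div_iff₀ hh, div_lt_iff₀ hh, mem_Ico]

lemma volume_Ico_intCast_mul (n : ℤ) :
    volume (Ico ((n : ℝ) * h) ((n + 1) * h)) = ENNReal.ofReal h := by
  rw [Real.volume_Ico, add_one_mul, add_sub_cancel_left]

lemma lintegral_eq_tsum_Ico (hh : 0 < h) (g : ℝ → ℝ≥0∞) :
    ∫⁻ x, g x = ∑' n : ℤ, ∫⁻ x in Ico (n * h) ((n + 1) * h), g x := by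
  have hcover : ⋃ n : ℤ, Ico (n * h) ((n + 1) * h) = univ := by
    simpa only [zsmul_eq_mul, Int.cast_add, Int.cast_one] using iUnion_Ico_zsmul hh
  have hdisj : Pairwise (Function.onFun Disjoint fun n : ℤ => Ico (n * h) ((n + 1) * h)) := by
    simpa only [zsmul_eq_mul, Int.cast_add, Int.cast_one] using pairwise_disjoint_Ico_zsmul h
  rw [← setLIntegral_univ, ← hcover, lintegral_iUnion (fun _ => measurableSet_Ico) hdisj]

lemma linearInterp_sub (u v : ℤ → E) :
    linearInterp h (u - v) = linearInterp h u - linearInterp h v := by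
  ext x
  simp only [linearInterp, Pi.sub_apply, smul_sub]
  abel

lemma linearInterp_mem_closedBall {u : ℤ → E} {x : ℝ} {c : E} {r : ℝ}
    (h₀ : u ⌊x / h⌋ ∈ closedBall c r) (h₁ : u (⌊x / h⌋ + 1) ∈ closedBall c r) :
    linearInterp h u x ∈ closedBall c r :=
  convex_closedBall c r h₀ h₁ (sub_nonneg.2 (Int.fract_lt_one _).le) (Int.fract_nonneg _)
    (sub_add_cancel 1 _)

lemma enorm_linearInterp_sq_le (u : ℤ → E) (x : ℝ) :
    ‖linearInterp h u x‖ₑ ^ 2 ≤ ‖u ⌊x / h⌋‖ₑ ^ 2 + ‖u (⌊x / h⌋ + 1)‖ₑ ^ 2 := by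
  set a := u ⌊x / h⌋
  set b := u (⌊x / h⌋ + 1)
  have hmax : ‖linearInterp h u x‖ₑ ≤ max ‖a‖ₑ ‖b‖ₑ := by
    have := linearInterp_mem_closedBall (h := h) (u := u) (x := x) (c := 0) (r := max ‖a‖ ‖b‖)
      (by simp [a]) (by simp [b])
    rw [mem_closedBall_zero_iff] at this
    simpa [← ofReal_norm] using ENNReal.ofReal_le_ofReal this
  calc ‖linearInterp h u x‖ₑ ^ 2 ≤ max ‖a‖ₑ ‖b‖ₑ ^ 2 := by gcongr
    _ ≤ ‖a‖ₑ ^ 2 + ‖b‖ₑ ^ 2 := by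
      rcases le_total ‖a‖ₑ ‖b‖ₑ with hab | hab
      · rw [max_eq_right hab]; exact le_add_self
      · rw [max_eq_left hab]; exact le_self_add

lemma stronglyMeasurable_linearInterp (u : ℤ → E) : StronglyMeasurable (linearInterp h u) := by
  have hfloor : Measurable fun x : ℝ => ⌊x / h⌋ := (measurable_id.div_const h).floor
  have hfract : Measurable fun x : ℝ => Int.fract (x / h) := (measurable_id.div_const h).fract
  exact ((hfract.const_sub 1).stronglyMeasurable.smul
      (StronglyMeasurable.of_discrete.comp_measurable hfloor)).add
    (hfract.stronglyMeasurable.smul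
      ((StronglyMeasurable.of_discrete (f := fun n : ℤ => u (n + 1))).comp_measurable hfloor))

lemma lintegral_enorm_linearInterp_sq_le (hh : 0 < h) (u : ℤ → E) :
    ∫⁻ x, ‖linearInterp h u x‖ₑ ^ 2 ≤ 2 * ∑' n : ℤ, ENNReal.ofReal h * ‖u n‖ₑ ^ 2 := by
  have hcell : ∀ n : ℤ, ∫⁻ x in Ico (n * h) ((n + 1) * h), ‖linearInterp h u x‖ₑ ^ 2
      ≤ ENNReal.ofReal h * ‖u n‖ₑ ^ 2 + ENNReal.ofReal h * ‖u (n + 1)‖ₑ ^ 2 := by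
    intro n
    calc ∫⁻ x in Ico (n * h) ((n + 1) * h), ‖linearInterp h u x‖ₑ ^ 2
        ≤ ∫⁻ _ in Ico (n * h) ((n + 1) * h), (‖u n‖ₑ ^ 2 + ‖u (n + 1)‖ₑ ^ 2) :=
          setLIntegral_mono measurable_const fun x hx => by
            simpa only [(floor_div_eq_iff hh).2 hx] using enorm_linearInterp_sq_le (h := h) u x
      _ = _ := by
          rw [setLIntegral_const, volume_Ico_intCast_mul]
          ring
  calc ∫⁻ x, ‖linearInterp h u x‖ₑ ^ 2
      = ∑' n : ℤ, ∫⁻ x in Ico (n * h) ((n + 1) * h), ‖linearInterp h u x‖ₑ ^ 2 :=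
        lintegral_eq_tsum_Ico hh _
    _ ≤ ∑' n : ℤ, (ENNReal.ofReal h * ‖u n‖ₑ ^ 2 + ENNReal.ofReal h * ‖u (n + 1)‖ₑ ^ 2) :=
        ENNReal.tsum_le_tsum hcell
    _ = 2 * ∑' n : ℤ, ENNReal.ofReal h * ‖u n‖ₑ ^ 2 := by
        have hshift := (Equiv.addRight (1 : ℤ)).tsum_eq fun n => ENNReal.ofReal h * ‖u n‖ₑ ^ 2
        simp only [Equiv.coe_addRight] at hshift
        rw [ENNReal.tsum_add, hshift, two_mul]

lemma latticeAverage_eq_intervalAverage (f : ℝ → E) (n : ℤ) :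
    latticeAverage h f n = ⨍ x in (n * h)..((n + 1) * h), f x := by
  rw [latticeAverage, interval_average_eq, show ((n : ℝ) + 1) * h - n * h = h by ring]

lemma latticeAverage_sub {f g : ℝ → E} (hf : LocallyIntegrable f) (hg : LocallyIntegrable g) :
    latticeAverage h (f - g) = latticeAverage h f - latticeAverage h g := by
  ext n
  simp only [latticeAverage, Pi.sub_apply]
  rw [intervalIntegral.integral_sub (hf.integrableOn_isCompact isCompact_uIcc).intervalIntegrable
    (hg.integrableOn_isCompact isCompact_uIcc).intervalIntegrable, smul_sub]

lemma latticeAverage_mem_closedBall [CompleteSpace E] (hh : 0 < h) {f : ℝ → E} {n : ℤ} {c : E}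
    {r : ℝ} (hf : IntervalIntegrable f volume (n * h) ((n + 1) * h))
    (hfc : ∀ y ∈ Ioc (n * h) ((n + 1) * h), f y ∈ closedBall c r) :
    latticeAverage h f n ∈ closedBall c r := by
  have hle : (n : ℝ) * h ≤ (n + 1) * h := by nlinarith
  have hvol : volume (Ioc ((n : ℝ) * h) ((n + 1) * h)) = ENNReal.ofReal h :=
    (measure_congr Ico_ae_eq_Ioc).symm.trans (volume_Ico_intCast_mul n)
  rw [latticeAverage_eq_intervalAverage, uIoc_of_le hle]
  refine (convex_closedBall c r).set_average_mem isClosed_closedBall ?_ ?_ ?_ hf.1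
  · simpa [hvol] using hh
  · simp [hvol]
  · exact (ae_restrict_iff' measurableSet_Ioc).2 (ae_of_all _ hfc)

lemma ofReal_mul_enorm_latticeAverage_sq_le (hh : 0 < h) {f : ℝ → E}
    (hf : AEStronglyMeasurable f) (n : ℤ) :
    ENNReal.ofReal h * ‖latticeAverage h f n‖ₑ ^ 2
      ≤ ∫⁻ x in Ico (n * h) ((n + 1) * h), ‖f x‖ₑ ^ 2 := by
  set X := ENNReal.ofReal h
  set μ := volume.restrict (Ico ((n : ℝ) * h) ((n + 1) * h))
  have hle : (n : ℝ) * h ≤ (n + 1) * h := by nlinarith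
  have hμ : μ univ = X := by
    rw [Measure.restrict_apply_univ, volume_Ico_intCast_mul]
  have hX : X * X⁻¹ = 1 := ENNReal.mul_inv_cancel (by simpa [X] using hh) ENNReal.ofReal_ne_top
  have hsqrt : (X ^ (1 / 2 : ℝ)) ^ 2 = X := by
    rw [← ENNReal.rpow_natCast, ← ENNReal.rpow_mul]; norm_num
  have hL1 : ‖latticeAverage h f n‖ₑ ≤ X⁻¹ * eLpNorm f 1 μ := by
    rw [latticeAverage, intervalIntegral.integral_of_le hle,
      Measure.restrict_congr_set Ico_ae_eq_Ioc.symm, enorm_smul, eLpNorm_one_eq_lintegral_enorm,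
      Real.enorm_eq_ofReal (inv_nonneg.2 hh.le), ENNReal.ofReal_inv_of_pos hh]
    gcongr
    exact enorm_integral_le_lintegral_enorm _
  have hL2 : eLpNorm f 1 μ ≤ eLpNorm f 2 μ * X ^ (1 / 2 : ℝ) := by
    have := eLpNorm_le_eLpNorm_mul_rpow_measure_univ (μ := μ) one_le_two hf.restrict
    rwa [hμ, ENNReal.toReal_one, ENNReal.toReal_ofNat,
      show (1 : ℝ) / 1 - 1 / 2 = 1 / 2 by norm_num] at this
  calc X * ‖latticeAverage h f n‖ₑ ^ 2 ≤ X * (X⁻¹ * (eLpNorm f 2 μ * X ^ (1 / 2 : ℝ))) ^ 2 := by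
        gcongr
        exact hL1.trans (by gcongr)
    _ = (X * X⁻¹) ^ 2 * eLpNorm f 2 μ ^ 2 := by rw [mul_pow, mul_pow, hsqrt]; ring
    _ = ∫⁻ x in Ico (n * h) ((n + 1) * h), ‖f x‖ₑ ^ 2 := by
        rw [hX, one_pow, one_mul, eLpNorm_two_sq]

theorem eLpNorm_interpolant_le (hh : 0 < h) {f : ℝ → E} (hf : AEStronglyMeasurable f) :
    eLpNorm (interpolant h f) 2 volume ≤ 2 * eLpNorm f 2 volume := by
  rw [← ENNReal.pow_le_pow_left_iff two_ne_zero, mul_pow, eLpNorm_two_sq, eLpNorm_two_sq]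
  calc ∫⁻ x, ‖interpolant h f x‖ₑ ^ 2
      ≤ 2 * ∑' n : ℤ, ENNReal.ofReal h * ‖latticeAverage h f n‖ₑ ^ 2 :=
        lintegral_enorm_linearInterp_sq_le hh _
    _ ≤ 2 * ∫⁻ x, ‖f x‖ₑ ^ 2 := by
        rw [lintegral_eq_tsum_Ico hh]
        gcongr with n
        exact ofReal_mul_enorm_latticeAverage_sq_le hh hf n
    _ ≤ 2 ^ 2 * ∫⁻ x, ‖f x‖ₑ ^ 2 := by gcongr; norm_num

lemma interpolant_mem_closedBall [CompleteSpace E] (hh : 0 < h) {f : ℝ → E}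
    (hf : LocallyIntegrable f) {x : ℝ} {c : E} {r : ℝ}
    (hfc : ∀ y ∈ Icc (x - 2 * h) (x + 2 * h), f y ∈ closedBall c r) :
    interpolant h f x ∈ closedBall c r := by
  obtain ⟨hx₁, hx₂⟩ := (floor_div_eq_iff hh (x := x)).1 rfl
  have hint : ∀ a b : ℝ, IntervalIntegrable f volume a b := fun a b =>
    (hf.integrableOn_isCompact isCompact_uIcc).intervalIntegrable
  refine linearInterp_mem_closedBall
    (latticeAverage_mem_closedBall hh (hint _ _) fun y hy => hfc y ⟨?_, ?_⟩)
    (latticeAverage_mem_closedBall hh (hint _ _) fun y hy => hfc y ⟨?_, ?_⟩)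
  all_goals push_cast at hy ⊢; linarith [hy.1, hy.2]

lemma support_interpolant_subset [CompleteSpace E] (hh : 0 < h) {f : ℝ → E}
    (hf : LocallyIntegrable f) :
    Function.support (interpolant h f) ⊆ cthickening (2 * h) (Function.support f) := by
  intro x hx
  by_contra hxf
  have hzero : ∀ y ∈ Icc (x - 2 * h) (x + 2 * h), f y ∈ closedBall 0 0 := by
    intro y hy
    by_contra hfy
    refine hxf (mem_cthickening_of_dist_le x y _ _ (by simpa [closedBall_zero] using hfy) ?_)
    rw [Real.dist_eq, abs_le]
    constructor <;> linarith [hy.1, hy.2]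
  exact hx (by simpa [closedBall_zero] using interpolant_mem_closedBall hh hf hzero)

lemma tendstoUniformly_interpolant [CompleteSpace E] {f : ℝ → E} (hf : UniformContinuous f) :
    TendstoUniformly (fun h => interpolant h f) f (𝓝[>] 0) := by
  rw [Metric.tendstoUniformly_iff]
  intro ε hε
  obtain ⟨δ, hδ, hfδ⟩ := Metric.uniformContinuous_iff.1 hf (ε / 2) (half_pos hε)
  filter_upwards [Ioo_mem_nhdsGT (show (0 : ℝ) < δ / 4 by positivity)] with h hh x
  have hclose : interpolant h f x ∈ closedBall (f x) (ε / 2) :=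
    interpolant_mem_closedBall hh.1 hf.continuous.locallyIntegrable fun y hy =>
      mem_closedBall.2 (hfδ (by
        rw [Real.dist_eq, abs_lt]
        constructor <;> linarith [hy.1, hy.2, hh.2])).le
  rw [dist_comm]
  exact (mem_closedBall.1 hclose).trans_lt (half_lt_self hε)

theorem tendsto_eLpNorm_interpolant_sub_of_hasCompactSupport [CompleteSpace E] {g : ℝ → E}
    (hg : Continuous g) (hgs : HasCompactSupport g) :
    Tendsto (fun h => eLpNorm (interpolant h g - g) 2 volume) (𝓝[>] 0) (𝓝 0) := by
  refine tendsto_eLpNorm_sub_of_tendstoUniformly ENNReal.ofNat_ne_top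
    isClosed_cthickening.measurableSet (hgs.cthickening (r := 2)).measure_lt_top.ne
    (tendstoUniformly_interpolant (hgs.uniformContinuous_of_continuous hg)) ?_
    ((subset_tsupport g).trans (self_subset_cthickening _))
  filter_upwards [Ioc_mem_nhdsGT one_pos] with h hh
  exact (support_interpolant_subset hh.1 hg.locallyIntegrable).trans
    ((cthickening_mono (by linarith [hh.2]) _).trans
      (cthickening_subset_of_subset _ (subset_tsupport g)))

lemma eLpNorm_interpolant_sub_le (hh : 0 < h) {f g : ℝ → E} (hf : MemLp f 2) (hg : MemLp g 2) :
    eLpNorm (interpolant h f - f) 2 volume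
      ≤ 3 * eLpNorm (f - g) 2 volume + eLpNorm (interpolant h g - g) 2 volume := by
  have hlin : interpolant h f - f = interpolant h (f - g) + (interpolant h g - g) - (f - g) := by
    rw [interpolant, interpolant, interpolant,
      latticeAverage_sub (hf.locallyIntegrable one_le_two) (hg.locallyIntegrable one_le_two),
      linearInterp_sub]
    abel
  have hmeas : ∀ u : ℝ → E, AEStronglyMeasurable (interpolant h u) := fun u =>
    (stronglyMeasurable_linearInterp _).aestronglyMeasurable
  calc eLpNorm (interpolant h f - f) 2 volume
      ≤ eLpNorm (interpolant h (f - g)) 2 volume + eLpNorm (interpolant h g - g) 2 volume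
          + eLpNorm (f - g) 2 volume := by
        rw [hlin]
        refine (eLpNorm_sub_le ((hmeas _).add ((hmeas _).sub hg.1)) (hf.1.sub hg.1)
          one_le_two).trans ?_
        gcongr
        exact eLpNorm_add_le (hmeas _) ((hmeas _).sub hg.1) one_le_two
    _ ≤ 2 * eLpNorm (f - g) 2 volume + eLpNorm (interpolant h g - g) 2 volume
          + eLpNorm (f - g) 2 volume := by
        gcongr
        exact eLpNorm_interpolant_le hh (hf.1.sub hg.1)
    _ = 3 * eLpNorm (f - g) 2 volume + eLpNorm (interpolant h g - g) 2 volume := by ring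

theorem tendsto_eLpNorm_interpolant_sub [CompleteSpace E] {f : ℝ → E} (hf : MemLp f 2) :
    Tendsto (fun h => eLpNorm (interpolant h f - f) 2 volume) (𝓝[>] 0) (𝓝 0) := by
  rw [ENNReal.tendsto_nhds_zero]
  intro ε hε
  obtain ⟨g, hgs, hfg, hg, hgm⟩ := hf.exists_hasCompactSupport_eLpNorm_sub_le
    ENNReal.ofNat_ne_top (ε := ε / 2 / 3) (by simp [hε.ne'])
  filter_upwards [(tendsto_eLpNorm_interpolant_sub_of_hasCompactSupport hg hgs).eventually
    (eventually_le_nhds (ENNReal.half_pos hε.ne')), self_mem_nhdsWithin] with h hgh hh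
  calc eLpNorm (interpolant h f - f) 2 volume
      ≤ 3 * eLpNorm (f - g) 2 volume + eLpNorm (interpolant h g - g) 2 volume :=
        eLpNorm_interpolant_sub_le hh hf hgm
    _ ≤ 3 * (ε / 2 / 3) + ε / 2 := by gcongr
    _ = ε := by rw [ENNReal.mul_div_cancel' (by simp) (by simp), ENNReal.add_halves]

lemma latticeAverage_eq_one_div_mul_integral (f : ℝ → ℂ) (n : ℤ) :
    latticeAverage h f n = (1 / h : ℂ) * ∫ x in (n * h)..((n + 1) * h), f x := by
  rw [latticeAverage, Complex.real_smul]
  push_cast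
  ring

lemma linearInterp_eq_add_mul (hh : h ≠ 0) (u : ℤ → ℂ) (x : ℝ) :
    linearInterp h u x = u ⌊x / h⌋ +
      (h⁻¹ : ℂ) * (u (⌊x / h⌋ + 1) - u ⌊x / h⌋) * ((x - (⌊x / h⌋ : ℝ) * h : ℝ) : ℂ) := by
  have hh' : (h : ℂ) ≠ 0 := by exact_mod_cast hh
  rw [linearInterp, Complex.real_smul, Complex.real_smul, Int.fract]
  push_cast
  field_simp
  ring

end LatticeInterpolation

open LatticeInterpolation

/-- The piecewise linear interpolation of the discretization of an `L²` function converges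
to the function in `L²` as the lattice spacing `h` tends to `0⁺`. -/
theorem interpolation_converges_L2 (f : ℝ → ℂ) (hf : MemLp f 2 (volume : Measure ℝ))
    (fd : ℝ → ℤ → ℂ)
    (hfd : ∀ h : ℝ, 0 < h → ∀ n : ℤ,
      fd h n = (1 / h : ℂ) * ∫ x in ((n : ℝ) * h)..(((n : ℝ) + 1) * h), f x)
    (ph : ℝ → ℝ → ℂ)
    (hph : ∀ h : ℝ, 0 < h → ∀ x : ℝ,
      ph h x = fd h ⌊x / h⌋ +
        (h⁻¹ : ℂ) * (fd h (⌊x / h⌋ + 1) - fd h ⌊x / h⌋) * ((x - (⌊x / h⌋ : ℝ) * h : ℝ) : ℂ)) :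
    Tendsto (fun h : ℝ => eLpNorm (fun x => ph h x - f x) 2 (volume : Measure ℝ))
      (𝓝[>] (0 : ℝ)) (𝓝 0) := by
  have hfd' : ∀ h : ℝ, 0 < h → fd h = latticeAverage h f := fun h hh =>
    funext fun n => by rw [hfd h hh, latticeAverage_eq_one_div_mul_integral]
  have hph' : ∀ h : ℝ, 0 < h → ph h = interpolant h f := fun h hh =>
    funext fun x => by rw [hph h hh, hfd' h hh, interpolant, linearInterp_eq_add_mul hh.ne']
  refine (tendsto_eLpNorm_interpolant_sub hf).congr' ?_
  filter_upwards [self_mem_nhdsWithin] with h hh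
  rw [hph' h hh]
  rfl
end
end

section
/- Let β : ℝ → ℝ be a domain-wall function: β is odd, increasing, continuously differentiable with bounded derivative, β(x) → β(∞) ∈ (0, ∞) as x → +∞, β(x) → −β(∞) as x → −∞, and ∫₀^∞ |β(y) − β(∞)| dy < ∞, ∫_{−∞}^0 |β(y) + β(∞)| dy < ∞. For h > 0 let β_h : ℤ → ℝ be the discretization β_h(n) = (1/h)∫_{nh}^{(n+1)h} β(x) dx and let p_h β_h be its piecewise linear interpolation, (p_h β_h)(x) = β_h(n) + h⁻¹(β_h(n+1) − β_h(n))·(x − nh) for x ∈ [nh, (n+1)h). Then p_h β_h − β ∈ L²(ℝ) for every h > 0 and ‖p_h β_h − β‖_{L²(ℝ)} → 0 as h → 0⁺. -/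
/-!
For `x ∈ [nh, (n+1)h)` the interpolant `p_h β_h (x)` lies between the averages of `β` over the
cells `[nh, (n+1)h]` and `[(n+1)h, (n+2)h]`, hence, `β` being monotone, between `β (x - h)` and
`β (x + 2h)`, and so does `β x`. Therefore `|p_h β_h - β| (x) ≤ β (x + 2h) - β (x - h) ≤ 2 β(∞)`,
so `|p_h β_h - β|² ≤ 2 β(∞) (β (x + 2h) - β (x - h))`. The integral of `β (x + 2h) - β (x - h)`
over `ℝ` telescopes to `3h · 2 β(∞)`, which gives `‖p_h β_h - β‖_{L²} ≤ 2 β(∞) √(3h)`.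
-/

open MeasureTheory Filter Topology Set intervalIntegral

noncomputable def latticeAverage (f : ℝ → ℝ) (h : ℝ) (n : ℤ) : ℝ :=
  h⁻¹ * ∫ x in n * h..(n + 1) * h, f x

noncomputable def linearInterpolation (h : ℝ) (u : ℤ → ℝ) (x : ℝ) : ℝ :=
  u ⌊x / h⌋ + h⁻¹ * (u (⌊x / h⌋ + 1) - u ⌊x / h⌋) * (x - ⌊x / h⌋ * h)

theorem Int.floor_div_mul_mem_Ioc {h : ℝ} (hh : 0 < h) (x : ℝ) :
    (⌊x / h⌋ : ℝ) * h ∈ Ioc (x - h) x := by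
  constructor
  · have := Int.sub_one_lt_floor (x / h)
    rw [div_sub_one hh.ne', div_lt_iff₀ hh] at this
    exact this
  · exact (le_div_iff₀ hh).1 (Int.floor_le _)

theorem Monotone.intervalIntegral_mem_Icc {f : ℝ → ℝ} (hf : Monotone f) {a b : ℝ} (hab : a ≤ b) :
    ∫ x in a..b, f x ∈ Icc ((b - a) * f a) ((b - a) * f b) := by
  have hfi : IntervalIntegrable f volume a b := hf.intervalIntegrable
  have lower := integral_mono_on hab intervalIntegrable_const hfi fun x hx => hf hx.1
  have upper := integral_mono_on hab hfi intervalIntegrable_const fun x hx => hf hx.2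
  rw [intervalIntegral.integral_const, smul_eq_mul] at lower upper
  exact ⟨lower, upper⟩

theorem latticeAverage_mem_Icc {f : ℝ → ℝ} (hf : Monotone f) {h : ℝ} (hh : 0 < h) (n : ℤ) :
    latticeAverage f h n ∈ Icc (f (n * h)) (f ((n + 1) * h)) := by
  have hI := hf.intervalIntegral_mem_Icc (a := n * h) (b := (n + 1) * h) (by nlinarith)
  rw [show (n + 1) * h - n * h = h by ring] at hI
  rw [latticeAverage, mem_Icc, le_inv_mul_iff₀ hh, inv_mul_le_iff₀ hh]
  exact hI

theorem linearInterpolation_mem_Icc {h : ℝ} (hh : 0 < h) {u : ℤ → ℝ} {x : ℝ}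
    (hu : u ⌊x / h⌋ ≤ u (⌊x / h⌋ + 1)) :
    linearInterpolation h u x ∈ Icc (u ⌊x / h⌋) (u (⌊x / h⌋ + 1)) := by
  obtain ⟨hlt, hle⟩ := Int.floor_div_mul_mem_Ioc hh x
  set t := h⁻¹ * (x - ⌊x / h⌋ * h)
  have ht0 : 0 ≤ t := mul_nonneg (inv_nonneg.2 hh.le) (by linarith)
  have ht1 : t ≤ 1 := by rw [inv_mul_le_one₀ hh]; linarith
  have hinterp : linearInterpolation h u x = u ⌊x / h⌋ + t * (u (⌊x / h⌋ + 1) - u ⌊x / h⌋) := by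
    rw [linearInterpolation]; ring
  rw [hinterp]
  constructor <;> nlinarith

theorem abs_linearInterpolation_latticeAverage_sub_le {f : ℝ → ℝ} (hf : Monotone f) {h : ℝ}
    (hh : 0 < h) (x : ℝ) :
    |linearInterpolation h (latticeAverage f h) x - f x| ≤ f (x + 2 * h) - f (x - h) := by
  set n := ⌊x / h⌋
  obtain ⟨hlt, hle⟩ := Int.floor_div_mul_mem_Ioc hh x
  obtain ⟨hn₀, hn₁⟩ := latticeAverage_mem_Icc hf hh n
  obtain ⟨hn₁', hn₂⟩ := latticeAverage_mem_Icc hf hh (n + 1)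
  obtain ⟨hp₀, hp₁⟩ := linearInterpolation_mem_Icc hh (hn₁.trans (by simpa using hn₁'))
  push_cast at hn₂
  have hleft : f (x - h) ≤ f (n * h) := hf hlt.le
  have hright : f ((n + 1 + 1) * h) ≤ f (x + 2 * h) := hf (by linarith)
  have hx : f x ∈ Icc (f (x - h)) (f (x + 2 * h)) := ⟨hf (by linarith), hf (by linarith)⟩
  rw [abs_le]
  constructor <;> linarith [hx.1, hx.2]

theorem Monotone.intervalIntegral_comp_add_sub_comp_sub_le {f : ℝ → ℝ} (hf : Monotone f)
    {m M : ℝ} (hm : ∀ x, m ≤ f x) (hM : ∀ x, f x ≤ M) {c d : ℝ} (hcd : 0 ≤ c + d) (a b : ℝ) :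
    ∫ x in a..b, (f (x + d) - f (x - c)) ≤ (c + d) * (M - m) := by
  have hfi {p q : ℝ} : IntervalIntegrable f volume p q := hf.intervalIntegrable
  have hplus : IntervalIntegrable (fun x => f (x + d)) volume a b :=
    Monotone.intervalIntegrable fun x y hxy => hf (by linarith)
  have hminus : IntervalIntegrable (fun x => f (x - c)) volume a b :=
    Monotone.intervalIntegrable fun x y hxy => hf (by linarith)
  obtain ⟨-, hupper⟩ := hf.intervalIntegral_mem_Icc (a := b - c) (b := b + d) (by linarith)
  obtain ⟨hlower, -⟩ := hf.intervalIntegral_mem_Icc (a := a - c) (b := a + d) (by linarith)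
  rw [show b + d - (b - c) = c + d by ring] at hupper
  rw [show a + d - (a - c) = c + d by ring] at hlower
  calc ∫ x in a..b, (f (x + d) - f (x - c))
      = (∫ x in b - c..b + d, f x) - ∫ x in a - c..a + d, f x := by
        rw [integral_sub hplus hminus, integral_comp_add_right, integral_comp_sub_right,
          integral_interval_sub_interval_comm' hfi hfi hfi]
    _ ≤ (c + d) * (f (b + d) - f (a - c)) := by linarith
    _ ≤ (c + d) * (M - m) :=
        mul_le_mul_of_nonneg_left (by linarith [hm (a - c), hM (b + d)]) hcd

theorem Monotone.integrable_comp_add_sub_comp_sub {f : ℝ → ℝ} (hf : Monotone f)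
    {m M : ℝ} (hm : ∀ x, m ≤ f x) (hM : ∀ x, f x ≤ M) {c d : ℝ} (hcd : 0 ≤ c + d) :
    Integrable (fun x => f (x + d) - f (x - c)) := by
  refine integrable_of_intervalIntegral_norm_bounded (l := atTop) (a := Neg.neg) (b := id)
    ((c + d) * (M - m))
    (fun R => (Monotone.intervalIntegrable (fun x y hxy => hf (by linarith))).sub
      (Monotone.intervalIntegrable (fun x y hxy => hf (by linarith))) |>.1)
    tendsto_neg_atTop_atBot tendsto_id (Eventually.of_forall fun _ => ?_)
  have hnorm : (fun x => ‖f (x + d) - f (x - c)‖) = fun x => f (x + d) - f (x - c) :=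
    funext fun x => Real.norm_of_nonneg (sub_nonneg.2 (hf (by linarith)))
  rw [hnorm]
  exact hf.intervalIntegral_comp_add_sub_comp_sub_le hm hM hcd _ _

theorem Monotone.integral_comp_add_sub_comp_sub_le {f : ℝ → ℝ} (hf : Monotone f)
    {m M : ℝ} (hm : ∀ x, m ≤ f x) (hM : ∀ x, f x ≤ M) {c d : ℝ} (hcd : 0 ≤ c + d) :
    ∫ x, (f (x + d) - f (x - c)) ≤ (c + d) * (M - m) :=
  le_of_tendsto' (intervalIntegral_tendsto_integral (hf.integrable_comp_add_sub_comp_sub hm hM hcd)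
    tendsto_neg_atTop_atBot tendsto_id)
    fun _ => hf.intervalIntegral_comp_add_sub_comp_sub_le hm hM hcd _ _

theorem memLp_two_of_sq_le {α : Type*} [MeasurableSpace α] {μ : Measure α} {F g : α → ℝ}
    (hF : AEStronglyMeasurable F μ) (hg : Integrable g μ) (hFg : ∀ x, F x ^ 2 ≤ g x) :
    MemLp F 2 μ :=
  (memLp_two_iff_integrable_sq hF).2 <| hg.mono' (hF.pow 2) <| ae_of_all _ fun x => by
    simpa only [Real.norm_eq_abs, abs_pow, sq_abs] using hFg x

theorem eLpNorm_two_le_sqrt_integral_of_sq_le {α : Type*} [MeasurableSpace α] {μ : Measure α}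
    {F g : α → ℝ} (hF : AEStronglyMeasurable F μ) (hg : Integrable g μ)
    (hFg : ∀ x, F x ^ 2 ≤ g x) :
    eLpNorm F 2 μ ≤ ENNReal.ofReal √(∫ x, g x ∂μ) := by
  rw [(memLp_two_of_sq_le hF hg hFg).eLpNorm_eq_integral_rpow_norm two_ne_zero
    ENNReal.ofNat_ne_top, Real.sqrt_eq_rpow, one_div]
  simp only [ENNReal.toReal_ofNat, Real.rpow_two, Real.norm_eq_abs, sq_abs]
  exact ENNReal.ofReal_le_ofReal (Real.rpow_le_rpow (integral_nonneg fun x => sq_nonneg _)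
    (integral_mono (memLp_two_of_sq_le hF hg hFg).integrable_sq hg hFg) (by norm_num))

theorem measurable_linearInterpolation (h : ℝ) (u : ℤ → ℝ) :
    Measurable (linearInterpolation h u) := by
  have hfloor : Measurable fun x : ℝ => ⌊x / h⌋ :=
    Int.measurable_floor.comp (measurable_id.div_const h)
  have hlattice (v : ℤ → ℝ) : Measurable fun x => v ⌊x / h⌋ :=
    (measurable_of_countable v).comp hfloor
  exact (hlattice u).add ((((hlattice (u ∘ (· + 1))).sub (hlattice u)).const_mul _).mul
    (measurable_id.sub ((hlattice (↑)).mul_const h)))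

theorem sq_linearInterpolation_latticeAverage_sub_le {f : ℝ → ℝ} (hf : Monotone f)
    {m M : ℝ} (hm : ∀ x, m ≤ f x) (hM : ∀ x, f x ≤ M) {h : ℝ} (hh : 0 < h) (x : ℝ) :
    (linearInterpolation h (latticeAverage f h) x - f x) ^ 2 ≤
      (M - m) * (f (x + 2 * h) - f (x - h)) := by
  have hosc := abs_linearInterpolation_latticeAverage_sub_le hf hh x
  rw [← sq_abs, sq]
  exact mul_le_mul (hosc.trans (by linarith [hm (x - h), hM (x + 2 * h)])) hosc (abs_nonneg _)
    (sub_nonneg.2 ((hm x).trans (hM x)))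

theorem memLp_linearInterpolation_latticeAverage_sub {f : ℝ → ℝ} (hf : Monotone f)
    {m M : ℝ} (hm : ∀ x, m ≤ f x) (hM : ∀ x, f x ≤ M) {h : ℝ} (hh : 0 < h) :
    MemLp (fun x => linearInterpolation h (latticeAverage f h) x - f x) 2 :=
  memLp_two_of_sq_le ((measurable_linearInterpolation _ _).sub hf.measurable).aestronglyMeasurable
    ((hf.integrable_comp_add_sub_comp_sub hm hM (by linarith)).const_mul (M - m))
    (sq_linearInterpolation_latticeAverage_sub_le hf hm hM hh)

theorem eLpNorm_linearInterpolation_latticeAverage_sub_le {f : ℝ → ℝ} (hf : Monotone f)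
    {m M : ℝ} (hm : ∀ x, m ≤ f x) (hM : ∀ x, f x ≤ M) {h : ℝ} (hh : 0 < h) :
    eLpNorm (fun x => linearInterpolation h (latticeAverage f h) x - f x) 2 ≤
      ENNReal.ofReal (√(3 * h) * (M - m)) := by
  have hmM : 0 ≤ M - m := sub_nonneg.2 ((hm 0).trans (hM 0))
  have hosc := hf.integral_comp_add_sub_comp_sub_le hm hM (c := h) (d := 2 * h) (by linarith)
  refine (eLpNorm_two_le_sqrt_integral_of_sq_le
    ((measurable_linearInterpolation _ _).sub hf.measurable).aestronglyMeasurable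
    ((hf.integrable_comp_add_sub_comp_sub hm hM (by linarith)).const_mul (M - m))
    (sq_linearInterpolation_latticeAverage_sub_le hf hm hM hh)).trans
    (ENNReal.ofReal_le_ofReal ?_)
  rw [MeasureTheory.integral_const_mul]
  calc √((M - m) * ∫ x, (f (x + 2 * h) - f (x - h))) ≤ √(3 * h * (M - m) ^ 2) :=
        Real.sqrt_le_sqrt (by nlinarith)
    _ = √(3 * h) * (M - m) := by rw [Real.sqrt_mul (by linarith), Real.sqrt_sq hmM]

theorem domain_wall_interpolation_converges_general (β : ℝ → ℝ) (βinf : ℝ)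
    (hmono : StrictMono β)
    (htop : Tendsto β atTop (𝓝 βinf)) (hbot : Tendsto β atBot (𝓝 (-βinf)))
    (βd : ℝ → ℤ → ℝ)
    (hβd : ∀ h : ℝ, 0 < h → ∀ n : ℤ,
      βd h n = (1 / h) * ∫ x in ((n : ℝ) * h)..(((n : ℝ) + 1) * h), β x)
    (ph : ℝ → ℝ → ℝ)
    (hph : ∀ h : ℝ, 0 < h → ∀ x : ℝ,
      ph h x = βd h ⌊x / h⌋ +
        h⁻¹ * (βd h (⌊x / h⌋ + 1) - βd h ⌊x / h⌋) * (x - (⌊x / h⌋ : ℝ) * h)) :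
    (∀ h : ℝ, 0 < h → MemLp (fun x => ph h x - β x) 2 (volume : Measure ℝ)) ∧
    Tendsto (fun h : ℝ => eLpNorm (fun x => ph h x - β x) 2 (volume : Measure ℝ))
      (𝓝[>] (0 : ℝ)) (𝓝 0) := by
  have hβ := hmono.monotone
  have hph_eq (h : ℝ) (hh : 0 < h) : ph h = linearInterpolation h (latticeAverage β h) := by
    have hβd_eq : βd h = latticeAverage β h := funext fun n => by
      rw [hβd h hh, latticeAverage, one_div]
    funext x
    rw [hph h hh, hβd_eq, linearInterpolation]
  have hlower := hβ.le_of_tendsto hbot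
  have hupper := hβ.ge_of_tendsto htop
  constructor
  · intro h hh
    exact hph_eq h hh ▸ memLp_linearInterpolation_latticeAverage_sub hβ hlower hupper hh
  · have hrate : Tendsto (fun h => ENNReal.ofReal (√(3 * h) * (βinf - -βinf))) (𝓝[>] 0) (𝓝 0) :=
      (ENNReal.tendsto_ofReal (((Real.continuous_sqrt.comp (continuous_const.mul continuous_id)).mul
        continuous_const).tendsto' 0 0 (by simp) |>.mono_left nhdsWithin_le_nhds)).trans
        (by rw [ENNReal.ofReal_zero])
    refine tendsto_of_tendsto_of_tendsto_of_le_of_le' tendsto_const_nhds hrate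
      (Eventually.of_forall fun _ => zero_le) ?_
    filter_upwards [self_mem_nhdsWithin] with h hh
    exact hph_eq h hh ▸ eLpNorm_linearInterpolation_latticeAverage_sub_le hβ hlower hupper hh

/-- For a domain-wall mass function `β` (odd, increasing, `C¹` with bounded derivative,
with limits `±βinf` at `±∞` approached in an integrable way), the piecewise linear
interpolation of its discretization differs from `β` by an `L²` function, and this
difference tends to `0` in `L²` as the lattice spacing `h` tends to `0⁺`. -/
theorem domain_wall_interpolation_converges (β : ℝ → ℝ) (βinf : ℝ) (hβinf : 0 < βinf)
    (hodd : ∀ x : ℝ, β (-x) = -β x) (hmono : StrictMono β) (hC1 : ContDiff ℝ 1 β)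
    (hbd : ∃ Cd : ℝ, ∀ x : ℝ, |deriv β x| ≤ Cd)
    (htop : Tendsto β atTop (𝓝 βinf)) (hbot : Tendsto β atBot (𝓝 (-βinf)))
    (hint_top : IntegrableOn (fun y : ℝ => |β y - βinf|) (Ici 0) volume)
    (hint_bot : IntegrableOn (fun y : ℝ => |β y + βinf|) (Iic 0) volume)
    (βd : ℝ → ℤ → ℝ)
    (hβd : ∀ h : ℝ, 0 < h → ∀ n : ℤ,
      βd h n = (1 / h) * ∫ x in ((n : ℝ) * h)..(((n : ℝ) + 1) * h), β x)
    (ph : ℝ → ℝ → ℝ)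
    (hph : ∀ h : ℝ, 0 < h → ∀ x : ℝ,
      ph h x = βd h ⌊x / h⌋ +
        h⁻¹ * (βd h (⌊x / h⌋ + 1) - βd h ⌊x / h⌋) * (x - (⌊x / h⌋ : ℝ) * h)) :
    (∀ h : ℝ, 0 < h → MemLp (fun x => ph h x - β x) 2 (volume : Measure ℝ)) ∧
    Tendsto (fun h : ℝ => eLpNorm (fun x => ph h x - β x) 2 (volume : Measure ℝ))
      (𝓝[>] (0 : ℝ)) (𝓝 0) :=
  domain_wall_interpolation_converges_general β βinf hmono htop hbot βd hβd ph hph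
end
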